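/- arXiv:1206.6237 — 4 statements merged into one kernel-verified Lean document; each statement's English description precedes it below -/
import Mathlib

section
/- In the free group F on generators x and y, the element x·y·x·yⁿ is not primitive for any integer n ≥ 3. -/
/-!
If `{w, v}` generates `F`, every homomorphism killing `w` has cyclic image, generated by the
image of `v`; so it suffices to map `x y x yⁿ` to `1` in a non-abelian group, and dihedral
groups do this. For `n` even, send `x` to a reflection and `y` to a rotation of order `n - 1`:
then `x y x yⁿ ↦ y⁻¹ yⁿ = yⁿ⁻¹ = 1`. For `n` odd, send `x` to a rotation and `y` to a
reflection: then `yⁿ ↦ y` and `x y x y ↦ x x⁻¹ = 1`.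
-/

abbrev F := FreeGroup (Fin 2)

def x : F := FreeGroup.of 0
def y : F := FreeGroup.of 1

def IsPrimitive (w : F) : Prop := ∃ v : F, Subgroup.closure ({w, v} : Set F) = ⊤

theorem MonoidHom.commute_apply_of_closure_pair_eq_top {H G : Type*} [Group H] [Group G]
    {w v : H} (hwv : Subgroup.closure {w, v} = ⊤) (φ : H →* G) (hw : φ w = 1) (a b : H) :
    Commute (φ a) (φ b) := by
  have hrange : φ.range ≤ Subgroup.zpowers (φ v) := by
    rw [MonoidHom.range_eq_map, ← hwv, MonoidHom.map_closure, Set.image_pair, hw,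
      Subgroup.closure_insert_one, Subgroup.zpowers_eq_closure]
  obtain ⟨k, hk⟩ := hrange ⟨a, rfl⟩
  obtain ⟨l, hl⟩ := hrange ⟨b, rfl⟩
  rw [← hk, ← hl]
  exact Commute.zpow_zpow_self _ k l

namespace DihedralGroup

theorem not_commute_r_one_sr_zero {m : ℕ} (h1 : m ≠ 1) (h2 : m ≠ 2) :
    ¬ Commute (r 1 : DihedralGroup m) (sr 0) := by
  intro h
  have htwo : ((2 : ℕ) : ZMod m) = 0 := by
    have := sr.inj (h.eq.symm.trans (r_mul_sr 1 0)).symm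
    push_cast
    linear_combination -this
  rcases (Nat.dvd_prime Nat.prime_two).mp ((ZMod.natCast_eq_zero_iff _ _).mp htwo) with h | h
  exacts [h1 h, h2 h]

theorem lift_sr_r_apply_xyxyn (m : ℕ) (n : ℤ) :
    FreeGroup.lift ![sr 0, r 1] (x * y * x * y ^ n) = r ((n - 1 : ℤ) : ZMod m) := by
  simp only [x, y, map_mul, map_zpow, FreeGroup.lift_apply_of, Matrix.cons_val_zero,
    Matrix.cons_val_one, r_one_zpow, sr_mul_r, sr_mul_sr, r_mul_r]
  push_cast
  ring_nf

theorem lift_r_sr_apply_xyxyn {m : ℕ} {n : ℤ} (hn : Odd n) :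
    FreeGroup.lift ![r 1, sr 0] (x * y * x * y ^ n) = (1 : DihedralGroup m) := by
  obtain ⟨k, rfl⟩ := hn
  simp only [x, y, map_mul, map_zpow, FreeGroup.lift_apply_of, Matrix.cons_val_zero,
    Matrix.cons_val_one, zpow_add, zpow_mul, zpow_two, sr_mul_self, one_zpow, one_mul, zpow_one,
    r_mul_sr, sr_mul_r, sr_mul_sr]
  rw [one_def]
  ring_nf

end DihedralGroup

open DihedralGroup in
theorem xyxyn_not_primitive (n : ℤ) (hn : 3 ≤ n) :
    ¬ IsPrimitive (x * y * x * y ^ n) := by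
  rintro ⟨v, hv⟩
  rcases Int.even_or_odd n with ⟨k, rfl⟩ | hn_odd
  · obtain ⟨m, hm⟩ : ∃ m : ℕ, (m : ℤ) = k + k - 1 := ⟨(k + k - 1).toNat, by omega⟩
    have hw : FreeGroup.lift ![sr 0, r 1] (x * y * x * y ^ (k + k)) = (1 : DihedralGroup m) := by
      rw [lift_sr_r_apply_xyxyn, ← hm, Int.cast_natCast, ZMod.natCast_self, r_zero]
    have hcomm := MonoidHom.commute_apply_of_closure_pair_eq_top hv _ hw y x
    simp only [x, y, FreeGroup.lift_apply_of, Matrix.cons_val_zero, Matrix.cons_val_one] at hcomm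
    exact not_commute_r_one_sr_zero (by omega) (by omega) hcomm
  · have hcomm := MonoidHom.commute_apply_of_closure_pair_eq_top hv _
      (lift_r_sr_apply_xyxyn (m := 3) hn_odd) x y
    simp only [x, y, FreeGroup.lift_apply_of, Matrix.cons_val_zero, Matrix.cons_val_one] at hcomm
    exact not_commute_r_one_sr_zero (by decide) (by decide) hcomm
end

section
/- In the free group F on generators x and y, for integers a and b with |a − b| = 1, the element x·yᵃ·x·yᵇ is primitive. -/
theorem xya_xyb_primitive (a b : ℤ) (h : |a - b| = 1) :
    IsPrimitive (x * y ^ a * x * y ^ b) := by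
  refine ⟨x * y ^ a, ?_⟩
  set w : F := x * y ^ a * x * y ^ b with hw
  set v : F := x * y ^ a with hv
  set S := Subgroup.closure ({w, v} : Set F) with hS
  have hwS : w ∈ S := Subgroup.subset_closure (by simp)
  have hvS : v ∈ S := Subgroup.subset_closure (by simp)
  have hyba : y ^ (b - a) ∈ S := by
    have : y ^ (b - a) = v⁻¹ * (v⁻¹ * w) := by
      rw [hw, hv]
      group
    rw [this]
    exact mul_mem (inv_mem hvS) (mul_mem (inv_mem hvS) hwS)
  have hyS : y ∈ S := by
    rcases abs_eq (by norm_num : (0:ℤ) ≤ 1) |>.mp h with h1 | h1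
    · have : b - a = -1 := by omega
      rw [this] at hyba
      simpa using inv_mem hyba
    · have : b - a = 1 := by omega
      rw [this] at hyba
      simpa using hyba
  have hxS : x ∈ S := by
    have : x = v * (y ^ a)⁻¹ := by rw [hv]; group
    rw [this]
    exact mul_mem hvS (inv_mem (zpow_mem hyS a))
  rw [eq_top_iff, ← FreeGroup.closure_range_of (Fin 2)]
  apply Subgroup.closure_le _ |>.mpr
  rintro _ ⟨i, rfl⟩
  fin_cases i
  · exact hxS
  · exact hyS
end

section
/- In the group G with presentation ⟨α, β, γ, σ | α² = γ² = σ² = 1, α central⟩, the element α has order exactly 2 and the element β has infinite order. -/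
/-- Relators of ⟨α, β, γ, σ | α² = γ² = σ² = 1, α central⟩,
with α = of 0, β = of 1, γ = of 2, σ = of 3. -/
def rels : Set (FreeGroup (Fin 4)) :=
  { (FreeGroup.of 0) ^ 2, (FreeGroup.of 2) ^ 2, (FreeGroup.of 3) ^ 2,
    FreeGroup.of 0 * FreeGroup.of 1 * (FreeGroup.of 0)⁻¹ * (FreeGroup.of 1)⁻¹,
    FreeGroup.of 0 * FreeGroup.of 2 * (FreeGroup.of 0)⁻¹ * (FreeGroup.of 2)⁻¹,
    FreeGroup.of 0 * FreeGroup.of 3 * (FreeGroup.of 0)⁻¹ * (FreeGroup.of 3)⁻¹ }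

/-!
Both claims are witnessed by abelian quotients of `G`: sending every generator to the generator
of `ℤ/2` shows `α ≠ 1`, while `α² = 1` is a relator; sending `β` to `1 ∈ ℤ` and the other
generators to `0` shows that `β` has infinite order.
-/

/-- In a commutative target the centrality relators hold automatically. -/
def liftToCommGroup {A : Type*} [CommGroup A] (f : Fin 4 → A)
    (h0 : f 0 ^ 2 = 1) (h2 : f 2 ^ 2 = 1) (h3 : f 3 ^ 2 = 1) : PresentedGroup rels →* A :=
  PresentedGroup.toGroup (f := f) <| by
    rintro r (rfl | rfl | rfl | rfl | rfl | rfl) <;> simp [h0, h2, h3, mul_inv_cancel_comm]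

theorem of_zero_sq : PresentedGroup.of (rels := rels) 0 ^ 2 = 1 :=
  PresentedGroup.one_of_mem (x := FreeGroup.of 0 ^ 2) (by simp [rels])

theorem of_zero_ne_one : PresentedGroup.of (rels := rels) 0 ≠ 1 := fun h => by
  have := congrArg (liftToCommGroup (fun _ => Multiplicative.ofAdd (1 : ZMod 2))
    (by decide) (by decide) (by decide)) h
  simp [liftToCommGroup, PresentedGroup.toGroup.of] at this

theorem not_isOfFinOrder_of_one : ¬ IsOfFinOrder (PresentedGroup.of (rels := rels) 1) := fun h => by
  have := (liftToCommGroup (Pi.mulSingle 1 (Multiplicative.ofAdd (1 : ℤ)))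
    (by simp) (by simp) (by simp)).isOfFinOrder h
  simp [liftToCommGroup, PresentedGroup.toGroup.of, isOfFinOrder_iff_eq_one] at this

theorem alpha_order_two_beta_infinite_order :
    orderOf (PresentedGroup.of (rels := rels) 0) = 2 ∧
    ¬ IsOfFinOrder (PresentedGroup.of (rels := rels) 1) :=
  ⟨orderOf_eq_prime of_zero_sq of_zero_ne_one, not_isOfFinOrder_of_one⟩
end

section
/- Let A = (ℤ/2ℤ) × (ℤ ∗ ℤ/2ℤ) with the ℤ/2ℤ factor generated by α, let B = (ℤ/2ℤ) × (ℤ/2ℤ) with first factor generated by α, and let C = ℤ/2ℤ = ⟨α⟩ embedded in A and B as the first factor. Then the amalgamated free product A ∗_C B is isomorphic to (ℤ/2ℤ) × (ℤ ∗ ℤ/2ℤ ∗ ℤ/2ℤ). -/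
/-!
The copy of `C = ℤ/2` is a direct factor of both `A = C × (ℤ ∗ ℤ/2)` and `B = C × ℤ/2`, so it
commutes with the complementary factors in `A ∗_C B`. Hence for any family of monoids
`C × Hᵢ` amalgamated along `C`, the pushout is `C × (∗ᵢ Hᵢ)`: the maps to and from
`C × (∗ᵢ Hᵢ)` are defined by universal properties and are mutually inverse on generators.
Here `(ℤ ∗ ℤ/2) ∗ ℤ/2 ≅ ℤ ∗ (ℤ/2 ∗ ℤ/2)`.
-/

open Monoid

abbrev M2 := Multiplicative (ZMod 2)
abbrev MZ := Multiplicative ℤ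

/-- `A = (ℤ/2) × (ℤ ∗ ℤ/2)`. -/
abbrev A := M2 × Coprod MZ M2
/-- `B = (ℤ/2) × (ℤ/2)`. -/
abbrev B := M2 × M2

/-- The family `{A, B}` indexed by `Bool`. -/
def Gfam : Bool → Type := fun b => bif b then A else B

instance : ∀ b, Group (Gfam b) := fun b => by
  cases b
  · exact inferInstanceAs (Group B)
  · exact inferInstanceAs (Group A)

/-- The first-factor inclusions `C = ℤ/2 ↪ A` and `C ↪ B`. -/
def φ : ∀ b, M2 →* Gfam b := fun b =>
  match b with
  | true => MonoidHom.inl M2 (Coprod MZ M2)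
  | false => MonoidHom.inl M2 M2

namespace Monoid

namespace PushoutI

section Congr

variable {ι : Type*} {G G' : ι → Type*} {H : Type*} [∀ i, Monoid (G i)] [∀ i, Monoid (G' i)]
  [Monoid H]

def congr {φ : ∀ i, H →* G i} {φ' : ∀ i, H →* G' i} (e : ∀ i, G i ≃* G' i)
    (he : ∀ i, (e i : G i →* G' i).comp (φ i) = φ' i) : PushoutI φ ≃* PushoutI φ' :=
  MonoidHom.toMulEquiv
    (lift (fun i => (of i).comp (e i : G i →* G' i)) (base φ')
      fun i => by rw [MonoidHom.comp_assoc, he, of_comp_eq_base])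
    (lift (fun i => (of i).comp ((e i).symm : G' i →* G i)) (base φ)
      fun i => by
        rw [MonoidHom.comp_assoc, ← of_comp_eq_base i]
        congr 1
        ext h
        simp [← he i])
    (hom_ext (fun i => by ext; simp) (by ext; simp))
    (hom_ext (fun i => by ext; simp) (by ext; simp))

end Congr

section Prod

variable {ι : Type*} {C : Type*} {H : ι → Type*} [Monoid C] [∀ i, Monoid (H i)]

local notation "P" => PushoutI (fun i => MonoidHom.inl C (H i))

def toProd : P →* C × CoprodI H :=
  lift (fun i => (MonoidHom.id C).prodMap CoprodI.of) (MonoidHom.inl C (CoprodI H))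
    fun i => by ext <;> simp

@[simp]
theorem toProd_of (i : ι) (x : C × H i) : toProd (of i x : P) = (x.1, CoprodI.of x.2) :=
  lift_of ..

@[simp]
theorem toProd_base (c : C) : toProd (base _ c : P) = (c, 1) :=
  lift_base ..

def ofCoprodIInr : CoprodI H →* P :=
  CoprodI.lift fun i => (of i).comp (MonoidHom.inr C (H i))

@[simp]
theorem ofCoprodIInr_of (i : ι) (h : H i) : (ofCoprodIInr (CoprodI.of h) : P) = of i (1, h) :=
  CoprodI.lift_of ..

theorem commute_base_ofCoprodIInr (c : C) (w : CoprodI H) :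
    Commute (base _ c) (ofCoprodIInr w : P) := by
  induction w using CoprodI.induction_on with
  | one => exact Commute.one_right _
  | of i h =>
    rw [ofCoprodIInr_of, ← of_apply_eq_base _ i]
    exact (MonoidHom.commute_inl_inr c h).map _
  | mul w w' hw hw' =>
    rw [map_mul]
    exact hw.mul_right hw'

def ofProd : C × CoprodI H →* P :=
  (base _).noncommCoprod ofCoprodIInr commute_base_ofCoprodIInr

@[simp]
theorem ofProd_apply (x : C × CoprodI H) : (ofProd x : P) = base _ x.1 * ofCoprodIInr x.2 :=
  rfl

@[simp]
theorem toProd_ofCoprodIInr (w : CoprodI H) : toProd (ofCoprodIInr w : P) = (1, w) := by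
  have : (toProd : P →* C × CoprodI H).comp ofCoprodIInr = MonoidHom.inr C (CoprodI H) :=
    CoprodI.ext_hom _ _ fun i => by ext <;> simp
  exact DFunLike.congr_fun this w

theorem ofProd_comp_toProd : (ofProd : C × CoprodI H →* P).comp toProd = MonoidHom.id P := by
  refine hom_ext (fun i => ?_) (by ext; simp)
  ext x
  simp [← of_apply_eq_base _ i, ← map_mul]

theorem toProd_comp_ofProd : (toProd : P →* C × CoprodI H).comp ofProd = MonoidHom.id _ := by
  ext x <;> simp

def inlMulEquivProd : P ≃* C × CoprodI H :=
  MonoidHom.toMulEquiv toProd ofProd ofProd_comp_toProd toProd_comp_ofProd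

end Prod

end PushoutI

def CoprodI.boolMulEquivCoprod (G : Bool → Type*) [∀ b, Monoid (G b)] :
    CoprodI G ≃* Coprod (G true) (G false) :=
  MonoidHom.toMulEquiv
    (CoprodI.lift fun
      | true => Coprod.inl
      | false => Coprod.inr)
    (Coprod.lift CoprodI.of CoprodI.of)
    (CoprodI.ext_hom _ _ fun
      | true => by ext; simp
      | false => by ext; simp)
    (Coprod.hom_ext (by ext; simp) (by ext; simp))

end Monoid

def Hfam : Bool → Type := fun b => bif b then Coprod MZ M2 else M2

instance : ∀ b, Monoid (Hfam b) := fun b => by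
  cases b
  · exact inferInstanceAs (Monoid M2)
  · exact inferInstanceAs (Monoid (Coprod MZ M2))

def gfamEquivProd : ∀ b, Gfam b ≃* M2 × Hfam b
  | true => MulEquiv.refl _
  | false => MulEquiv.refl _

theorem gfamEquivProd_comp_φ (b : Bool) :
    (gfamEquivProd b : Gfam b →* M2 × Hfam b).comp (φ b) = MonoidHom.inl M2 (Hfam b) := by
  cases b <;> rfl

/-- The amalgamated free product `A ∗_C B` is `(ℤ/2) × (ℤ ∗ ℤ/2 ∗ ℤ/2)`. -/
theorem amalgam_iso :
    Nonempty (Monoid.PushoutI φ ≃* M2 × Coprod MZ (Coprod M2 M2)) :=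
  ⟨(PushoutI.congr gfamEquivProd gfamEquivProd_comp_φ).trans <|
    PushoutI.inlMulEquivProd.trans <|
      MulEquiv.prodCongr (MulEquiv.refl M2)
        ((CoprodI.boolMulEquivCoprod Hfam).trans (MulEquiv.coprodAssoc _ _ _))⟩
end
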